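/- In the string s'_i (defined by the substitution rules 0 → 0^{4B}, 1 → h'_i starting from "1"), every maximal run of consecutive 1's has length at most 4, every maximal run of consecutive 0's has length of the form (4B)^j summed appropriately (in particular each h'_i block contains no run of 0's longer than 2 and each h'_i starts and ends with 1). -/
import Mathlib

/-- `h_i ∈ {0,1}^B`: its `j`-th bit (1-indexed `j`) is `1` iff `B(i-1)+j ∉ Y`. -/
def hBlk (B : ℕ) (Y : Finset ℕ) (i : ℕ) : List Bool :=
  (List.range B).map fun j => decide (B * (i - 1) + (j + 1) ∉ Y)

/-- `h'_i`: `h_i` with every `0` replaced by `1011` and every `1` replaced by `1101`. -/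
def hBlk' (B : ℕ) (Y : Finset ℕ) (i : ℕ) : List Bool :=
  (hBlk B Y i).flatMap fun b =>
    if b then [true, true, false, true] else [true, false, true, true]

/-- `s'_0 = "1"`; `s'_i` is obtained from `s'_{i-1}` by simultaneously replacing every
`0` with `0^{4B}` and every `1` with `h'_i`. -/
def sBWT (B : ℕ) (Y : Finset ℕ) : ℕ → List Bool
  | 0 => [true]
  | (i + 1) =>
      (sBWT B Y i).flatMap fun c =>
        if c then hBlk' B Y (i + 1) else List.replicate (4 * B) false

def enc (b : Bool) : List Bool :=
  if b then [true, true, false, true] else [true, false, true, true]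

def gch : Option Bool → List Bool
  | some b => enc b
  | none => List.replicate 4 false

/-- Run-tracking automaton: `n` is the current run length of symbol `b`;
returns `false` iff some run reaches length `cap`. -/
def rOk (b : Bool) (cap : ℕ) : ℕ → List Bool → Bool
  | _, [] => true
  | n, c :: L => if c = b then decide (n + 1 < cap) && rOk b cap (n + 1) L
                 else rOk b cap 0 L

lemma rOk_append {b : Bool} {cap : ℕ} :
    ∀ (a : List Bool) (n : ℕ) (c : List Bool),
      rOk b cap n (a ++ c) = true → ∃ m, rOk b cap m c = true := by
  intro a
  induction a with
  | nil => exact fun n c h => ⟨n, h⟩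
  | cons x xs ih =>
    intro n c h
    by_cases hx : x = b
    · simp [rOk, hx] at h
      exact ih _ _ h.2
    · simp [rOk, hx] at h
      exact ih _ _ h

lemma rOk_rep {b : Bool} {cap : ℕ} :
    ∀ (c' m : ℕ) (u : List Bool), 1 ≤ c' → cap ≤ m + c' →
      rOk b cap m (List.replicate c' b ++ u) = false := by
  intro c'
  induction c' with
  | zero => omega
  | succ k ih =>
    intro m u _ hcap
    simp only [List.replicate_succ, List.cons_append, rOk, if_pos rfl]
    by_cases h : m + 1 < cap
    · have hk : 1 ≤ k := by omega
      simp [ih (m+1) u hk (by omega), h]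
    · simp [h]

lemma not_infix_of_rOk {b : Bool} {cap : ℕ} (hc : 1 ≤ cap) {L : List Bool}
    (h : rOk b cap 0 L = true) : ¬ (List.replicate cap b <:+: L) := by
  rintro ⟨s, t, rfl⟩
  rw [List.append_assoc] at h
  obtain ⟨m, hm⟩ := rOk_append s 0 _ h
  rw [rOk_rep cap m t hc (by omega)] at hm
  exact Bool.false_ne_true hm

lemma rOk_enc_true : ∀ (bits : List Bool) (n : ℕ), n ≤ 2 →
    rOk true 5 n (bits.flatMap enc) = true := by
  intro bits
  induction bits with
  | nil => intro n _; rfl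
  | cons b bs ih =>
    intro n hn
    cases b
    · show rOk true 5 n ([true, false, true, true] ++ bs.flatMap enc) = true
      simp only [List.cons_append, List.nil_append, rOk, if_pos rfl, Bool.true_eq_false,
        if_neg, reduceIte]
      simpa [show n + 1 < 5 by omega] using ih 2 (by norm_num)
    · show rOk true 5 n ([true, true, false, true] ++ bs.flatMap enc) = true
      simp [rOk]
      exact ⟨by omega, by omega, ih 1 (by norm_num)⟩

lemma rOk_enc_false : ∀ (bits : List Bool),
    rOk false 3 0 (bits.flatMap enc) = true := by
  intro bits
  induction bits with
  | nil => rfl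
  | cons b bs ih =>
    cases b
    · show rOk false 3 0 ([true, false, true, true] ++ bs.flatMap enc) = true
      simpa [rOk] using ih
    · show rOk false 3 0 ([true, true, false, true] ++ bs.flatMap enc) = true
      simpa [rOk] using ih

lemma rOk_gch : ∀ (chunks : List (Option Bool)) (n : ℕ), n ≤ 2 →
    rOk true 5 n (chunks.flatMap gch) = true := by
  intro chunks
  induction chunks with
  | nil => intro n _; rfl
  | cons c cs ih =>
    intro n hn
    match c with
    | none =>
      show rOk true 5 n (List.replicate 4 false ++ cs.flatMap gch) = true
      simpa [rOk, List.replicate] using ih 0 (by norm_num)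
    | some true =>
      show rOk true 5 n ([true, true, false, true] ++ cs.flatMap gch) = true
      simp [rOk]
      exact ⟨by omega, by omega, ih 1 (by norm_num)⟩
    | some false =>
      show rOk true 5 n ([true, false, true, true] ++ cs.flatMap gch) = true
      simpa [rOk, show n + 1 < 5 by omega] using ih 2 (by norm_num)

lemma hBlk'_eq (B : ℕ) (Y : Finset ℕ) (i : ℕ) :
    hBlk' B Y i = (hBlk B Y i).flatMap enc := rfl

lemma hBlk'_eq_gch (B : ℕ) (Y : Finset ℕ) (i : ℕ) :
    hBlk' B Y i = ((hBlk B Y i).map some).flatMap gch := by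
  rw [hBlk'_eq, List.flatMap_map]
  rfl

lemma rep_none_flatMap : ∀ n : ℕ,
    (List.replicate n (none : Option Bool)).flatMap gch = List.replicate (4 * n) false := by
  intro n
  induction n with
  | zero => rfl
  | succ k ih =>
    rw [List.replicate_succ, List.flatMap_cons, ih]
    show List.replicate 4 false ++ _ = _
    rw [← List.replicate_add]
    congr 1
    ring

lemma sBWT_rep (B : ℕ) (Y : Finset ℕ) :
    ∀ i : ℕ, ∃ chunks : List (Option Bool),
      sBWT B Y (i + 1) = chunks.flatMap gch := by
  intro i
  induction i with
  | zero =>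
    refine ⟨(hBlk B Y 1).map some, ?_⟩
    show [true].flatMap _ = _
    simp [hBlk'_eq_gch]
  | succ k ih =>
    obtain ⟨chunks, hc⟩ := ih
    refine ⟨(sBWT B Y (k + 1)).flatMap
      (fun c => if c then (hBlk B Y (k + 2)).map some else List.replicate B none), ?_⟩
    show (sBWT B Y (k + 1)).flatMap _ = _
    rw [List.flatMap_assoc]
    congr 1
    funext c
    cases c
    · simpa using (rep_none_flatMap B).symm
    · exact hBlk'_eq_gch B Y (k + 2)

lemma enc_ne_nil (b : Bool) : enc b ≠ [] := by cases b <;> simp [enc]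

lemma flatMap_enc_ne_nil : ∀ (bits : List Bool), bits ≠ [] → bits.flatMap enc ≠ [] := by
  intro bits h
  cases bits with
  | nil => exact absurd rfl h
  | cons b bs => simp [List.flatMap_cons, enc_ne_nil b]

lemma head_flatMap_enc : ∀ (bits : List Bool), bits ≠ [] →
    (bits.flatMap enc).head? = some true := by
  intro bits h
  cases bits with
  | nil => exact absurd rfl h
  | cons b bs => cases b <;> simp [enc]

lemma last_flatMap_enc : ∀ (bits : List Bool), bits ≠ [] →
    (bits.flatMap enc).getLast? = some true := by
  intro bits
  induction bits with
  | nil => intro h; exact absurd rfl h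
  | cons b bs ih =>
    intro _
    cases bs with
    | nil => cases b <;> simp [enc]
    | cons c cs =>
      rw [List.flatMap_cons, List.getLast?_append, ih (by simp)]
      rfl

lemma hBlk_ne_nil (B : ℕ) (hB : 3 ≤ B) (Y : Finset ℕ) (i : ℕ) : hBlk B Y i ≠ [] := by
  have : (hBlk B Y i).length = B := by simp [hBlk]
  intro h
  rw [h] at this
  simp at this
  omega

/-- in `s'_i` every run of consecutive `1`'s has length at most `4`;
in particular each `h'_i` contains no run of `0`'s longer than `2`, and each
`h'_i` starts and ends with `1`. -/
theorem stmt15 (B : ℕ) (hB : 3 ≤ B) (Y : Finset ℕ) (i : ℕ) (hi : 1 ≤ i) :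
    ¬ (List.replicate 5 true) <:+: (sBWT B Y i) ∧
    ¬ (List.replicate 3 false) <:+: (hBlk' B Y i) ∧
    (hBlk' B Y i).head? = some true ∧
    (hBlk' B Y i).getLast? = some true := by
  obtain ⟨j, rfl⟩ : ∃ j, i = j + 1 := ⟨i - 1, by omega⟩
  refine ⟨?_, ?_, ?_, ?_⟩
  · obtain ⟨chunks, hc⟩ := sBWT_rep B Y j
    rw [hc]
    exact not_infix_of_rOk (by norm_num) (rOk_gch chunks 0 (by norm_num))
  · rw [hBlk'_eq]
    exact not_infix_of_rOk (by norm_num) (rOk_enc_false _)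
  · rw [hBlk'_eq]
    exact head_flatMap_enc _ (hBlk_ne_nil B hB Y _)
  · rw [hBlk'_eq]
    exact last_flatMap_enc _ (hBlk_ne_nil B hB Y _)
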